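/- On U = {(x,y) ∈ ℝ² : 0 < x < π/2}, the metric g₄ given by the matrix G₄(x,y) = diag(cos⁴x, sin²x) (i.e., g₄ = (cos⁴x)dx² + (sin²x)dy²) has Gauss curvature K = −1/cos⁴x < 0, and the function k := √(−K) = 1/cos²x satisfies the tensor equation (∇²k)_{ij} = (5/(2k)) ∂_i k ∂_j k + 2k³ (g₄)_{ij} on U. -/

import Mathlib

noncomputable section
open Matrix Real

/-- Points of the parameter domain `U ⊆ ℝ²`. -/
abbrev Pt : Type := Fin 2 → ℝ
/-- Vectors in `ℝ³`. -/
abbrev Vec3 : Type := Fin 3 → ℝ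

/-- Partial derivative `∂ᵢ` of a scalar function on `ℝ²`. -/
def pd (i : Fin 2) (f : Pt → ℝ) : Pt → ℝ :=
  fun p => fderiv ℝ f p (Pi.single i 1)

/-- Partial derivative `∂ᵢ` of an `ℝ³`-valued function on `ℝ²`. -/
def pdV (i : Fin 2) (f : Pt → Vec3) : Pt → Vec3 :=
  fun p => fderiv ℝ f p (Pi.single i 1)

/-- The induced metric (first fundamental form) `gᵢⱼ = ∂ᵢφ ⬝ ∂ⱼφ` of a map `φ : ℝ² → ℝ³`. -/
def indMetric (φ : Pt → Vec3) : Pt → Matrix (Fin 2) (Fin 2) ℝ :=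
  fun p => Matrix.of fun i j => pdV i φ p ⬝ᵥ pdV j φ p

/-- The unit normal `n = (∂₁φ × ∂₂φ)/‖∂₁φ × ∂₂φ‖`. -/
def unitNormal (φ : Pt → Vec3) : Pt → Vec3 :=
  fun p => (Real.sqrt ((crossProduct (pdV 0 φ p) (pdV 1 φ p)) ⬝ᵥ
      (crossProduct (pdV 0 φ p) (pdV 1 φ p))))⁻¹ •
    crossProduct (pdV 0 φ p) (pdV 1 φ p)

/-- The second fundamental form `hᵢⱼ = n ⬝ ∂ᵢ∂ⱼφ`. -/
def sff (φ : Pt → Vec3) : Pt → Matrix (Fin 2) (Fin 2) ℝ :=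
  fun p => Matrix.of fun i j => unitNormal φ p ⬝ᵥ pdV i (pdV j φ) p

/-- Christoffel symbols `Γ^k_{ij}` of a metric `g`. -/
def christoffel (g : Pt → Matrix (Fin 2) (Fin 2) ℝ) (k i j : Fin 2) : Pt → ℝ :=
  fun p => (1/2) * ∑ l, (g p)⁻¹ k l *
    (pd i (fun q => g q j l) p + pd j (fun q => g q i l) p - pd l (fun q => g q i j) p)

/-- Covariant derivative `∇ᵢ h_{jk}` of a symmetric 2-tensor `h` with respect to `g`. -/
def covD (g h : Pt → Matrix (Fin 2) (Fin 2) ℝ) (i j k : Fin 2) : Pt → ℝ :=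
  fun p => pd i (fun q => h q j k) p
    - ∑ l, christoffel g l i j p * h p l k
    - ∑ l, christoffel g l i k p * h p j l

/-- Covariant Hessian `(∇²u)ᵢⱼ = ∂ᵢ∂ⱼu − Σₖ Γ^k_{ij} ∂ₖu`. -/
def hess (g : Pt → Matrix (Fin 2) (Fin 2) ℝ) (u : Pt → ℝ) (i j : Fin 2) : Pt → ℝ :=
  fun p => pd i (pd j u) p - ∑ k, christoffel g k i j p * pd k u p

/-- The curvature component `R₁₂₁₂` of a metric `g` (indices `1,2` rendered as `0,1`). -/
def R1212 (g : Pt → Matrix (Fin 2) (Fin 2) ℝ) : Pt → ℝ :=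
  fun p => ∑ m, g p 0 m *
    (pd 0 (christoffel g m 1 1) p - pd 1 (christoffel g m 1 0) p +
      ∑ l, (christoffel g m 0 l p * christoffel g l 1 1 p -
            christoffel g m 1 l p * christoffel g l 1 0 p))

/-- The Gauss curvature `K = R₁₂₁₂ / det g` of a metric `g`. -/
def gaussK (g : Pt → Matrix (Fin 2) (Fin 2) ℝ) : Pt → ℝ :=
  fun p => R1212 g p / (g p).det

/-- The squared norm `|du|²_g = Σᵢⱼ g^{ij} ∂ᵢu ∂ⱼu`. -/
def gradSq (g : Pt → Matrix (Fin 2) (Fin 2) ℝ) (u : Pt → ℝ) : Pt → ℝ :=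
  fun p => ∑ i, ∑ j, (g p)⁻¹ i j * pd i u p * pd j u p

/-- `g` is a smooth Riemannian metric on `U`: smooth entries, symmetric and
positive definite at each point of `U`. -/
def IsMetricOn (g : Pt → Matrix (Fin 2) (Fin 2) ℝ) (U : Set Pt) : Prop :=
  (∀ i j, ContDiffOn ℝ (⊤ : ℕ∞) (fun p => g p i j) U) ∧
  (∀ p ∈ U, (g p).IsSymm ∧ (g p).PosDef)

/-- `φ` is a smooth immersion on `U`. -/
def IsImmersionOn (φ : Pt → Vec3) (U : Set Pt) : Prop :=
  ContDiffOn ℝ (⊤ : ℕ∞) φ U ∧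
  ∀ p ∈ U, LinearIndependent ℝ ![pdV 0 φ p, pdV 1 φ p]

/-- The model metric `g₄ = cos⁴x dx² + sin²x dy²` on the strip `0 < x < π/2`. -/
def modelG : Pt → Matrix (Fin 2) (Fin 2) ℝ :=
  fun q => !![Real.cos (q 0) ^ 4, 0; 0, Real.sin (q 0) ^ 2]

/-- The candidate square root of the (absolute) Gauss curvature. -/
def modelk : Pt → ℝ :=
  fun q => 1 / Real.cos (q 0) ^ 2

/-!
For a diagonal metric `E(x) dx² + G(x) dy²` whose coefficients depend on `x` alone, the only
nonzero Christoffel symbols are `Γ^x_xx = E'/2E`, `Γ^x_yy = -G'/2E` and `Γ^y_xy = G'/2G`. This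
gives `K = (-G''/2 + E'G'/4E + G'²/4G)/(EG)` and an explicit Hessian for functions of `x`; for
`E = cos⁴`, `G = sin²` and `k = 1/cos²` both claims become trigonometric identities.
-/

open Filter Topology

lemma pd_congr {f g : Pt → ℝ} {p : Pt} (h : f =ᶠ[𝓝 p] g) (i : Fin 2) :
    pd i f p = pd i g p := by
  simp only [pd, h.fderiv_eq]

@[simp]
lemma pd_const (c : ℝ) (i : Fin 2) (p : Pt) : pd i (fun _ => c) p = 0 := by
  simp [pd]

lemma pd_comp_apply_zero {h : ℝ → ℝ} {h' : ℝ} {p : Pt} (hd : HasDerivAt h h' (p 0))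
    (i : Fin 2) : pd i (fun q => h (q 0)) p = if i = 0 then h' else 0 := by
  have H : HasFDerivAt (fun q : Pt => h (q 0))
      (h' • ContinuousLinearMap.proj (R := ℝ) (φ := fun _ : Fin 2 => ℝ) 0) p :=
    hd.comp_hasFDerivAt p (hasFDerivAt_apply 0 p)
  simp only [pd, H.fderiv]
  fin_cases i <;> simp

lemma pd_comp_apply_zero_eventuallyEq {h h' : ℝ → ℝ} {p : Pt}
    (hd : ∀ᶠ t in 𝓝 (p 0), HasDerivAt h (h' t) t) (i : Fin 2) :
    pd i (fun q => h (q 0)) =ᶠ[𝓝 p] fun q => if i = 0 then h' (q 0) else 0 :=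
  ((continuous_apply 0).tendsto p).eventually hd |>.mono fun _ hq => pd_comp_apply_zero hq i

def diagMetric (E G : ℝ → ℝ) : Pt → Matrix (Fin 2) (Fin 2) ℝ :=
  fun q => !![E (q 0), 0; 0, G (q 0)]

section diagMetric

variable {E G E' G' : ℝ → ℝ} {e g : ℝ} {p : Pt}

lemma inv_diagMetric (hE : E (p 0) ≠ 0) (hG : G (p 0) ≠ 0) :
    (diagMetric E G p)⁻¹ = !![(E (p 0))⁻¹, 0; 0, (G (p 0))⁻¹] := by
  apply Matrix.inv_eq_right_inv
  ext i j
  fin_cases i <;> fin_cases j <;> simp [diagMetric, hE, hG]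

lemma pd_diagMetric_apply (hE : HasDerivAt E e (p 0)) (hG : HasDerivAt G g (p 0))
    (i j l : Fin 2) :
    pd i (fun q => diagMetric E G q j l) p = if i = 0 then !![e, 0; 0, g] j l else 0 := by
  have hd : HasDerivAt (fun t => !![E t, 0; 0, G t] j l) (!![e, 0; 0, g] j l) (p 0) := by
    fin_cases j <;> fin_cases l <;> simp [hE, hG, hasDerivAt_const]
  exact pd_comp_apply_zero hd i

lemma christoffel_diagMetric (hE : HasDerivAt E e (p 0)) (hG : HasDerivAt G g (p 0))
    (hE0 : E (p 0) ≠ 0) (hG0 : G (p 0) ≠ 0) (k i j : Fin 2) :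
    christoffel (diagMetric E G) k i j p =
      ![!![e / (2 * E (p 0)), 0; 0, -g / (2 * E (p 0))],
        !![0, g / (2 * G (p 0)); g / (2 * G (p 0)), 0]] k i j := by
  simp only [christoffel, inv_diagMetric hE0 hG0, pd_diagMetric_apply hE hG, Fin.sum_univ_two]
  fin_cases k <;> fin_cases i <;> fin_cases j <;> simp <;> field_simp

lemma gaussK_diagMetric {G'' : ℝ} (hE : ∀ᶠ t in 𝓝 (p 0), HasDerivAt E (E' t) t)
    (hG : ∀ᶠ t in 𝓝 (p 0), HasDerivAt G (G' t) t) (hG' : HasDerivAt G' G'' (p 0))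
    (hE0 : E (p 0) ≠ 0) (hG0 : G (p 0) ≠ 0) :
    gaussK (diagMetric E G) p =
      (-G'' / 2 + E' (p 0) * G' (p 0) / (4 * E (p 0)) + G' (p 0) ^ 2 / (4 * G (p 0))) /
        (E (p 0) * G (p 0)) := by
  have hnear : ∀ᶠ q in 𝓝 p, HasDerivAt E (E' (q 0)) (q 0) ∧ HasDerivAt G (G' (q 0)) (q 0) ∧
      E (q 0) ≠ 0 ∧ G (q 0) ≠ 0 :=
    (continuous_apply 0).tendsto p |>.eventually <| hE.and <| hG.and <|
      (hE.self_of_nhds.continuousAt.eventually_ne hE0).and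
        (hG.self_of_nhds.continuousAt.eventually_ne hG0)
  have hΓ011 : christoffel (diagMetric E G) 0 1 1 =ᶠ[𝓝 p] fun q => -G' (q 0) / (2 * E (q 0)) :=
    hnear.mono fun q ⟨hEq, hGq, hEq0, hGq0⟩ => by
      simp [christoffel_diagMetric hEq hGq hEq0 hGq0]
  have hΓ010 : christoffel (diagMetric E G) 0 1 0 =ᶠ[𝓝 p] fun _ => 0 :=
    hnear.mono fun q ⟨hEq, hGq, hEq0, hGq0⟩ => by
      simp [christoffel_diagMetric hEq hGq hEq0 hGq0]
  have hdΓ011 : HasDerivAt (fun t => -G' t / (2 * E t))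
      ((G' (p 0) * (2 * E' (p 0)) - G'' * (2 * E (p 0))) / (2 * E (p 0)) ^ 2) (p 0) := by
    exact (hG'.neg.div (hE.self_of_nhds.const_mul 2) (mul_ne_zero two_ne_zero hE0)).congr_deriv
      (by simp only [Pi.neg_apply]; ring)
  simp only [gaussK, R1212, pd_congr hΓ011, pd_congr hΓ010, pd_comp_apply_zero hdΓ011,
    Fin.sum_univ_two, christoffel_diagMetric hE.self_of_nhds hG.self_of_nhds hE0 hG0]
  simp only [diagMetric, Fin.isValue, of_apply, cons_val', cons_val_zero, cons_val_fin_one,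
    cons_val_one, ↓reduceIte, pd_const, sub_zero, mul_zero, zero_sub, zero_mul, sub_self, add_zero,
    det_fin_two_of]
  field_simp
  ring

lemma hess_diagMetric_comp_apply_zero {f f' : ℝ → ℝ} {f'' : ℝ}
    (hE : HasDerivAt E e (p 0)) (hG : HasDerivAt G g (p 0)) (hE0 : E (p 0) ≠ 0)
    (hG0 : G (p 0) ≠ 0) (hf : ∀ᶠ t in 𝓝 (p 0), HasDerivAt f (f' t) t)
    (hf' : HasDerivAt f' f'' (p 0)) (i j : Fin 2) :
    hess (diagMetric E G) (fun q => f (q 0)) i j p =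
      !![f'' - e * f' (p 0) / (2 * E (p 0)), 0; 0, g * f' (p 0) / (2 * E (p 0))] i j := by
  simp only [hess, pd_congr (pd_comp_apply_zero_eventuallyEq hf j),
    pd_comp_apply_zero hf.self_of_nhds, Fin.sum_univ_two, christoffel_diagMetric hE hG hE0 hG0]
  fin_cases i <;> fin_cases j <;> simp [pd_comp_apply_zero hf'] <;> ring

end diagMetric

lemma modelG_eq_diagMetric : modelG = diagMetric (fun t => cos t ^ 4) (fun t => sin t ^ 2) := rfl

lemma modelk_eq : modelk = fun q => (fun t => 1 / cos t ^ 2) (q 0) := rfl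

section derivatives

variable (t : ℝ)

lemma hasDerivAt_cos_pow_four : HasDerivAt (fun t => cos t ^ 4) (-(4 * cos t ^ 3 * sin t)) t :=
  ((hasDerivAt_cos t).pow 4).congr_deriv (by push_cast; ring)

lemma hasDerivAt_sin_sq : HasDerivAt (fun t => sin t ^ 2) (2 * sin t * cos t) t :=
  ((hasDerivAt_sin t).pow 2).congr_deriv (by push_cast; ring)

lemma hasDerivAt_two_mul_sin_mul_cos :
    HasDerivAt (fun t => 2 * sin t * cos t) (2 * (cos t ^ 2 - sin t ^ 2)) t :=
  (((hasDerivAt_sin t).const_mul 2).mul (hasDerivAt_cos t)).congr_deriv (by ring)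

variable {t} (hc : cos t ≠ 0)
include hc

lemma hasDerivAt_one_div_cos_sq :
    HasDerivAt (fun t => 1 / cos t ^ 2) (2 * sin t / cos t ^ 3) t := by
  refine ((hasDerivAt_const t (1 : ℝ)).div ((hasDerivAt_cos t).pow 2)
    (pow_ne_zero 2 hc)).congr_deriv ?_
  simp only [Pi.pow_apply]
  field_simp
  ring

lemma hasDerivAt_two_mul_sin_div_cos_pow_three :
    HasDerivAt (fun t => 2 * sin t / cos t ^ 3) (2 / cos t ^ 2 + 6 * sin t ^ 2 / cos t ^ 4) t := by
  refine (((hasDerivAt_sin t).const_mul 2).div ((hasDerivAt_cos t).pow 3)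
    (pow_ne_zero 3 hc)).congr_deriv ?_
  simp only [Pi.pow_apply]
  field_simp
  ring

end derivatives

section model

variable {p : Pt} (hc : cos (p 0) ≠ 0) (hs : sin (p 0) ≠ 0)
include hc hs

lemma gaussK_modelG : gaussK modelG p = -(1 / cos (p 0) ^ 4) := by
  rw [modelG_eq_diagMetric, gaussK_diagMetric (.of_forall hasDerivAt_cos_pow_four)
    (.of_forall hasDerivAt_sin_sq) (hasDerivAt_two_mul_sin_mul_cos _) (pow_ne_zero 4 hc)
    (pow_ne_zero 2 hs)]
  field_simp
  ring

lemma hess_modelG_modelk (i j : Fin 2) :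
    hess modelG modelk i j p =
      5 / (2 * modelk p) * pd i modelk p * pd j modelk p + 2 * modelk p ^ 3 * modelG p i j := by
  have hk : ∀ᶠ t in 𝓝 (p 0), HasDerivAt (fun t => 1 / cos t ^ 2) (2 * sin t / cos t ^ 3) t :=
    (continuous_cos.continuousAt.eventually_ne hc).mono fun _ => hasDerivAt_one_div_cos_sq
  rw [modelG_eq_diagMetric, modelk_eq, hess_diagMetric_comp_apply_zero
    (hasDerivAt_cos_pow_four _) (hasDerivAt_sin_sq _) (pow_ne_zero 4 hc) (pow_ne_zero 2 hs) hk
    (hasDerivAt_two_mul_sin_div_cos_pow_three hc), pd_comp_apply_zero hk.self_of_nhds,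
    pd_comp_apply_zero hk.self_of_nhds]
  fin_cases i <;> fin_cases j <;> simp [diagMetric]
  all_goals field_simp
  ring

end model

/-- On the strip `0 < x < π/2`, the metric `g₄ = cos⁴x dx² + sin²x dy²` has Gauss curvature
`K = −1/cos⁴x < 0` and `k = √(−K) = 1/cos²x` satisfies the Darboux-integrability tensor equation
`(∇²k)ᵢⱼ = (5/(2k)) ∂ᵢk ∂ⱼk + 2k³ gᵢⱼ`. -/
theorem model_metric_check_16 :
    ∀ p : Pt, 0 < p 0 ∧ p 0 < Real.pi / 2 →
      gaussK modelG p = -(1 / Real.cos (p 0) ^ 4) ∧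
      gaussK modelG p < 0 ∧
      modelk p = Real.sqrt (- (gaussK modelG p)) ∧
      (∀ i j : Fin 2,
        hess modelG modelk i j p =
          (5 / (2 * modelk p)) * pd i modelk p * pd j modelk p
            + 2 * modelk p ^ 3 * modelG p i j) := by
  rintro p ⟨hp0, hp1⟩
  have hc : 0 < cos (p 0) := cos_pos_of_mem_Ioo ⟨by linarith [pi_pos], hp1⟩
  have hs : 0 < sin (p 0) := sin_pos_of_pos_of_lt_pi hp0 (by linarith [pi_pos])
  have hK := gaussK_modelG hc.ne' hs.ne'
  refine ⟨hK, ?_, ?_, hess_modelG_modelk hc.ne' hs.ne'⟩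
  · rw [hK, neg_lt_zero]
    positivity
  · rw [hK, neg_neg, show 1 / cos (p 0) ^ 4 = (1 / cos (p 0) ^ 2) ^ 2 by ring,
      sqrt_sq (by positivity)]
    rfl
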